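/- With the companion process S_i(W) started from a μ-random weight W, if g and h are bounded by J' and λ* > g̃₊ := sup_x E[g(x,W)], then lim_{k→∞} k · E[∏_{i=0}^{k-1} S_i(W)/(S_i(W)+λ*)] = 0. -/

import Mathlib

/-!
Write `p_k = ∏_{i<k} S_i / (S_i + λ*)`. Since `λ* p_{k+1} = S_k (p_k - p_{k+1})`, summation by
parts gives, pathwise,
`λ* ∑_{k<N} p_{k+1} ≤ S_0 + ∑_{k<N} p_{k+1} (S_{k+1} - S_k)`, where `S_0 = h(W₀)` and
`S_{k+1} - S_k = g(W₀, W_{k+1})`.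
As `p_{k+1}` is a function of `W₀, …, W_k`, independence lets us replace `g(W₀, W_{k+1})` by
`g̃(W₀) ≤ g̃₊` under the expectation, so `(λ* - g̃₊) ∑_{k<N} E[p_{k+1}] ≤ J'`. Finally, an antitone
summable sequence satisfies `k a_k → 0`, because `(k/2) a_k ≤ ∑_{k/2 ≤ i < k} a_i`.
-/

open MeasureTheory ProbabilityTheory Filter Finset Topology

theorem Antitone.tendsto_nat_mul_of_summable {f : ℕ → ℝ} (hf : Antitone f) (hs : Summable f) :
    Tendsto (fun n : ℕ => (n : ℝ) * f n) atTop (𝓝 0) := by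
  have hf0 : ∀ n, 0 ≤ f n := hf.le_of_tendsto hs.tendsto_atTop_zero
  have hblock : Tendsto (fun n => ∑ i ∈ Ico (n / 2) n, f i) atTop (𝓝 0) := by
    have h := hs.hasSum.tendsto_sum_nat
    have := h.sub (h.comp (Nat.tendsto_div_const_atTop two_ne_zero))
    rw [sub_self] at this
    refine this.congr fun n => ?_
    exact (sum_Ico_eq_sub f (Nat.div_le_self n 2)).symm
  refine squeeze_zero (fun n => mul_nonneg n.cast_nonneg (hf0 n)) (fun n => ?_)
    (by simpa using hblock.const_mul 2)
  have hn : (n : ℝ) ≤ 2 * (n - n / 2 : ℕ) := by exact_mod_cast (by omega : n ≤ 2 * (n - n / 2))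
  have hcard : ((n - n / 2 : ℕ) : ℝ) * f n ≤ ∑ i ∈ Ico (n / 2) n, f i := by
    simpa using card_nsmul_le_sum (Ico (n / 2) n) f (f n) fun i hi => hf (mem_Ico.1 hi).2.le
  nlinarith [hf0 n]

noncomputable def ratioProd (s : ℕ → ℝ) (c : ℝ) (k : ℕ) : ℝ := ∏ i ∈ range k, s i / (s i + c)

section ratioProd

variable {s : ℕ → ℝ} {c : ℝ}

theorem ratioProd_succ (s : ℕ → ℝ) (c : ℝ) (k : ℕ) :
    ratioProd s c (k + 1) = ratioProd s c k * (s k / (s k + c)) :=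
  prod_range_succ _ _

theorem ratioProd_nonneg (hs : ∀ i, 0 ≤ s i) (hc : 0 < c) (k : ℕ) : 0 ≤ ratioProd s c k :=
  prod_nonneg fun i _ => div_nonneg (hs i) (by linarith [hs i])

theorem ratioProd_le_one (hs : ∀ i, 0 ≤ s i) (hc : 0 < c) (k : ℕ) : ratioProd s c k ≤ 1 :=
  prod_le_one (fun i _ => div_nonneg (hs i) (by linarith [hs i]))
    fun i _ => div_le_one_of_le₀ (by linarith) (by linarith [hs i])

theorem ratioProd_succ_le (hs : ∀ i, 0 ≤ s i) (hc : 0 < c) (k : ℕ) :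
    ratioProd s c (k + 1) ≤ ratioProd s c k := by
  rw [ratioProd_succ]
  exact mul_le_of_le_one_right (ratioProd_nonneg hs hc k)
    (div_le_one_of_le₀ (by linarith) (by linarith [hs k]))

theorem mul_sum_ratioProd_add_mul_ratioProd (hc : ∀ k, s k + c ≠ 0) (N : ℕ) :
    c * ∑ k ∈ range N, ratioProd s c (k + 1) + s N * ratioProd s c N
      = s 0 + ∑ k ∈ range N, ratioProd s c (k + 1) * (s (k + 1) - s k) := by
  induction N with
  | zero => simp [ratioProd]
  | succ N ih =>
    rw [sum_range_succ, sum_range_succ, ← add_assoc, ← ih, ratioProd_succ s c N]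
    field_simp [hc N]
    ring

theorem mul_sum_ratioProd_le (hs : ∀ i, 0 ≤ s i) (hc : 0 < c) (N : ℕ) :
    c * ∑ k ∈ range N, ratioProd s c (k + 1)
      ≤ s 0 + ∑ k ∈ range N, ratioProd s c (k + 1) * (s (k + 1) - s k) := by
  rw [← mul_sum_ratioProd_add_mul_ratioProd (fun k => by linarith [hs k]) N]
  exact le_add_of_nonneg_right (mul_nonneg (hs N) (ratioProd_nonneg hs hc N))

end ratioProd

theorem ProbabilityTheory.IndepFun.integral_comp_eq_integral_integral
    {Ω α β E : Type*} [MeasurableSpace Ω] [MeasurableSpace α] [MeasurableSpace β]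
    [NormedAddCommGroup E] [NormedSpace ℝ E] {P : Measure Ω} [IsFiniteMeasure P]
    {X : Ω → α} {Y : Ω → β} (hXY : IndepFun X Y P) (hX : Measurable X) (hY : Measurable Y)
    {f : α → β → E} (hf : StronglyMeasurable (Function.uncurry f))
    (hfi : Integrable (fun ω => f (X ω) (Y ω)) P) :
    ∫ ω, f (X ω) (Y ω) ∂P = ∫ ω, ∫ y, f (X ω) y ∂(P.map Y) ∂P := by
  have hmap := hXY.map_prod_eq_prod_map_map hX.aemeasurable hY.aemeasurable
  have hXY' : Measurable fun ω => (X ω, Y ω) := hX.prodMk hY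
  have hint : Integrable (Function.uncurry f) ((P.map X).prod (P.map Y)) := by
    rw [← hmap]
    exact (integrable_map_measure hf.aestronglyMeasurable hXY'.aemeasurable).2 hfi
  calc ∫ ω, f (X ω) (Y ω) ∂P = ∫ z, Function.uncurry f z ∂(P.map fun ω => (X ω, Y ω)) :=
        (integral_map hXY'.aemeasurable hf.aestronglyMeasurable).symm
    _ = ∫ x, ∫ y, f x y ∂(P.map Y) ∂(P.map X) := by rw [hmap]; exact integral_prod _ hint
    _ = ∫ ω, ∫ y, f (X ω) y ∂(P.map Y) ∂P :=
        integral_map hX.aemeasurable hint.integral_prod_left.aestronglyMeasurable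

theorem ProbabilityTheory.iIndepFun.indepFun_of_measurable_iSup_lt
    {Ω ι α β : Type*} [MeasurableSpace Ω] [MeasurableSpace α] [mβ : MeasurableSpace β]
    [Preorder ι] {P : Measure Ω} {W : ι → Ω → β} (hW : iIndepFun W P)
    (hWm : ∀ i, Measurable (W i)) {X : Ω → α} {i : ι}
    (hX : Measurable[⨆ j < i, mβ.comap (W j)] X) : IndepFun X (W i) P := by
  rw [IndepFun_iff_Indep]
  have hdisj : Disjoint (Set.Iio i) {i} := Set.disjoint_singleton_right.2 (lt_irrefl i)
  have hindep := indep_iSup_of_disjoint (fun j => (hWm j).comap_le) hW.iIndep hdisj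
  refine indep_of_indep_of_le_right (indep_of_indep_of_le_left hindep hX.comap_le) ?_
  exact le_iSup₂_of_le (f := fun j (_ : j ∈ ({i} : Set ι)) => mβ.comap (W j)) i rfl le_rfl

noncomputable def companion {Ω : Type*} (h : ℝ → ℝ) (g : ℝ → ℝ → ℝ) (W : ℕ → Ω → ℝ)
    (i : ℕ) (ω : Ω) : ℝ :=
  h (W 0 ω) + ∑ j ∈ range i, g (W 0 ω) (W (j + 1) ω)

section companion

variable {Ω : Type*} {h : ℝ → ℝ} {g : ℝ → ℝ → ℝ} {W : ℕ → Ω → ℝ} {c : ℝ}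

theorem companion_zero (ω : Ω) : companion h g W 0 ω = h (W 0 ω) := by
  simp [companion]

theorem companion_succ_sub (i : ℕ) (ω : Ω) :
    companion h g W (i + 1) ω - companion h g W i ω = g (W 0 ω) (W (i + 1) ω) := by
  simp only [companion, sum_range_succ]
  ring

theorem companion_nonneg (hh0 : ∀ x, 0 ≤ h x) (hg0 : ∀ x y, 0 ≤ g x y) (i : ℕ) (ω : Ω) :
    0 ≤ companion h g W i ω :=
  add_nonneg (hh0 _) (sum_nonneg fun _ _ => hg0 _ _)

theorem measurable_ratioProd_companion {m : MeasurableSpace Ω}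
    (hgm : Measurable (Function.uncurry g)) (hhm : Measurable h) {k : ℕ}
    (hW : ∀ j < k, Measurable[m] (W j)) :
    Measurable[m] fun ω => ratioProd (fun i => companion h g W i ω) c k := by
  have hS : ∀ i < k, Measurable[m] (companion h g W i) := fun i hi =>
    (hhm.comp (hW 0 (by omega))).add <| Finset.measurable_sum _ fun j hj =>
      hgm.comp ((hW 0 (by omega)).prodMk (hW (j + 1) (by simp at hj; omega)))
  exact Finset.measurable_prod _ fun i hi =>
    (hS i (mem_range.1 hi)).div ((hS i (mem_range.1 hi)).add_const c)

variable [MeasurableSpace Ω] {P : Measure Ω} [IsFiniteMeasure P] {μ : Measure ℝ} {J : ℝ}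

theorem integrable_ratioProd_companion_mul (hgm : Measurable (Function.uncurry g))
    (hhm : Measurable h) (hWm : ∀ i, Measurable (W i)) (hh0 : ∀ x, 0 ≤ h x)
    (hg0 : ∀ x y, 0 ≤ g x y) (hc : 0 < c) {f : Ω → ℝ} (hfm : Measurable f)
    (hfJ : ∀ ω, |f ω| ≤ J) (k : ℕ) :
    Integrable (fun ω => ratioProd (fun i => companion h g W i ω) c k * f ω) P := by
  refine .of_bound ((measurable_ratioProd_companion hgm hhm fun j _ => hWm j).mul hfm
    ).aestronglyMeasurable J (ae_of_all _ fun ω => ?_)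
  have hs : ∀ i, 0 ≤ companion h g W i ω := fun i => companion_nonneg hh0 hg0 i ω
  rw [Real.norm_eq_abs, abs_mul, abs_of_nonneg (ratioProd_nonneg hs hc k)]
  exact mul_le_of_le_one_left (abs_nonneg _) (ratioProd_le_one hs hc k) |>.trans (hfJ ω)

theorem integrable_ratioProd_companion (hgm : Measurable (Function.uncurry g))
    (hhm : Measurable h) (hWm : ∀ i, Measurable (W i)) (hh0 : ∀ x, 0 ≤ h x)
    (hg0 : ∀ x y, 0 ≤ g x y) (hc : 0 < c) (k : ℕ) :
    Integrable (fun ω => ratioProd (fun i => companion h g W i ω) c k) P := by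
  simpa using integrable_ratioProd_companion_mul (J := 1) hgm hhm hWm hh0 hg0 hc
    (f := fun _ => 1) measurable_const (fun _ => by norm_num) k

theorem integral_ratioProd_companion_mul_eq (hW : iIndepFun W P) (hWm : ∀ i, Measurable (W i))
    (hgm : Measurable (Function.uncurry g)) (hhm : Measurable h) (hh0 : ∀ x, 0 ≤ h x)
    (hg0 : ∀ x y, 0 ≤ g x y) (hgJ : ∀ x y, g x y ≤ J) (hc : 0 < c) {k : ℕ}
    (hWk : P.map (W (k + 1)) = μ) :
    ∫ ω, ratioProd (fun i => companion h g W i ω) c (k + 1) * g (W 0 ω) (W (k + 1) ω) ∂P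
      = ∫ ω, ratioProd (fun i => companion h g W i ω) c (k + 1) * ∫ y, g (W 0 ω) y ∂μ ∂P := by
  have hWF : ∀ j < k + 1,
      Measurable[⨆ j < k + 1, MeasurableSpace.comap (W j) inferInstance] (W j) := fun j hj =>
    (comap_measurable (W j)).mono
      (le_iSup₂ (f := fun j (_ : j < k + 1) => MeasurableSpace.comap (W j) inferInstance) j hj)
      le_rfl
  have hXF := (hWF 0 k.succ_pos).prodMk (measurable_ratioProd_companion (c := c) hgm hhm hWF)
  have key := (hW.indepFun_of_measurable_iSup_lt hWm hXF).integral_comp_eq_integral_integral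
    (hXF.mono (iSup₂_le fun j _ => (hWm j).comap_le) le_rfl) (hWm (k + 1))
    (f := fun x y => x.2 * g x.1 y)
    (measurable_fst.snd.mul (hgm.comp (measurable_fst.fst.prodMk measurable_snd))
      ).stronglyMeasurable
    (integrable_ratioProd_companion_mul hgm hhm hWm hh0 hg0 hc
      (hgm.comp ((hWm 0).prodMk (hWm (k + 1))))
      (fun ω => (abs_of_nonneg (hg0 _ _)).trans_le (hgJ _ _)) (k + 1))
  simpa only [hWk, integral_const_mul] using key

theorem antitone_integral_ratioProd_companion (hgm : Measurable (Function.uncurry g))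
    (hhm : Measurable h) (hWm : ∀ i, Measurable (W i)) (hh0 : ∀ x, 0 ≤ h x)
    (hg0 : ∀ x y, 0 ≤ g x y) (hc : 0 < c) :
    Antitone fun k => ∫ ω, ratioProd (fun i => companion h g W i ω) c k ∂P := by
  have hs : ∀ ω i, 0 ≤ companion h g W i ω := fun ω i => companion_nonneg hh0 hg0 i ω
  refine antitone_nat_of_succ_le fun k => integral_mono_of_nonneg
    (ae_of_all _ fun ω => ratioProd_nonneg (hs ω) hc _)
    (integrable_ratioProd_companion hgm hhm hWm hh0 hg0 hc k)
    (ae_of_all _ fun ω => ratioProd_succ_le (hs ω) hc k)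

theorem mul_sum_integral_ratioProd_companion_le [IsProbabilityMeasure P] (hW : iIndepFun W P)
    (hWm : ∀ i, Measurable (W i)) (hWid : ∀ i, P.map (W i) = μ)
    (hgm : Measurable (Function.uncurry g)) (hhm : Measurable h) (hh0 : ∀ x, 0 ≤ h x)
    (hhJ : ∀ x, h x ≤ J) (hg0 : ∀ x y, 0 ≤ g x y) (hgJ : ∀ x y, g x y ≤ J) (hc : 0 < c)
    {M : ℝ} (hM : ∀ᵐ ω ∂P, ∫ y, g (W 0 ω) y ∂μ ≤ M) (N : ℕ) :
    c * ∑ k ∈ range N, ∫ ω, ratioProd (fun i => companion h g W i ω) c (k + 1) ∂P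
      ≤ J + M * ∑ k ∈ range N, ∫ ω, ratioProd (fun i => companion h g W i ω) c (k + 1) ∂P := by
  set p : ℕ → Ω → ℝ := fun k ω => ratioProd (fun i => companion h g W i ω) c k
  have hs : ∀ ω i, 0 ≤ companion h g W i ω := fun ω i => companion_nonneg hh0 hg0 i ω
  have hp0 : ∀ k ω, 0 ≤ p k ω := fun k ω => ratioProd_nonneg (hs ω) hc k
  have hpi : ∀ k, Integrable (p k) P :=
    integrable_ratioProd_companion hgm hhm hWm hh0 hg0 hc
  have hpgi : ∀ k, Integrable (fun ω => p (k + 1) ω * g (W 0 ω) (W (k + 1) ω)) P := fun k =>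
    integrable_ratioProd_companion_mul hgm hhm hWm hh0 hg0 hc
      (hgm.comp ((hWm 0).prodMk (hWm (k + 1))))
      (fun ω => (abs_of_nonneg (hg0 _ _)).trans_le (hgJ _ _)) (k + 1)
  have hhi : Integrable (fun ω => h (W 0 ω)) P :=
    .of_bound (hhm.comp (hWm 0)).aestronglyMeasurable J
      (ae_of_all _ fun ω => (abs_of_nonneg (hh0 _)).trans_le (hhJ _))
  calc c * ∑ k ∈ range N, ∫ ω, p (k + 1) ω ∂P
      = ∫ ω, c * ∑ k ∈ range N, p (k + 1) ω ∂P := by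
        rw [integral_const_mul, integral_finsetSum _ fun k _ => hpi (k + 1)]
    _ ≤ ∫ ω, h (W 0 ω) + ∑ k ∈ range N, p (k + 1) ω * g (W 0 ω) (W (k + 1) ω) ∂P := by
        refine integral_mono_of_nonneg
          (ae_of_all _ fun ω => mul_nonneg hc.le (sum_nonneg fun k _ => hp0 (k + 1) ω))
          (hhi.add (integrable_finsetSum _ fun k _ => hpgi k)) (ae_of_all _ fun ω => ?_)
        simpa only [companion_zero, companion_succ_sub] using mul_sum_ratioProd_le (hs ω) hc N
    _ = ∫ ω, h (W 0 ω) ∂P + ∑ k ∈ range N, ∫ ω, p (k + 1) ω * ∫ y, g (W 0 ω) y ∂μ ∂P := by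
        rw [integral_add hhi (integrable_finsetSum _ fun k _ => hpgi k),
          integral_finsetSum _ fun k _ => hpgi k]
        congr 1
        exact sum_congr rfl fun k _ =>
          integral_ratioProd_companion_mul_eq hW hWm hgm hhm hh0 hg0 hgJ hc (hWid (k + 1))
    _ ≤ J + ∑ k ∈ range N, M * ∫ ω, p (k + 1) ω ∂P := by
        refine add_le_add ?_ (sum_le_sum fun k _ => ?_)
        · refine (integral_mono_of_nonneg (ae_of_all _ fun ω => hh0 _) (integrable_const J)
            (ae_of_all _ fun ω => hhJ _)).trans_eq (by simp)
        · rw [← integral_const_mul]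
          refine integral_mono_of_nonneg
            (ae_of_all _ fun ω => mul_nonneg (hp0 _ ω) (integral_nonneg fun y => hg0 _ _))
            ((hpi (k + 1)).const_mul M) (hM.mono fun ω hω => ?_)
          exact (mul_le_mul_of_nonneg_left hω (hp0 _ ω)).trans_eq (mul_comm _ _)
    _ = J + M * ∑ k ∈ range N, ∫ ω, p (k + 1) ω ∂P := by rw [mul_sum]

end companion

/-- Claim 2.13.1: with the companion process `S_i(W)` started from a `μ`-random weight
`W = W₀`, if `g` and `h` are bounded by `J'` and `λ* > g̃₊ := sup_x E[g(x,W)]`, then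
`k · E[∏_{i=0}^{k-1} S_i(W)/(S_i(W)+λ*)] → 0` as `k → ∞`. -/
theorem k_times_tail_product_tendsto_zero
    {Ω : Type*} [MeasurableSpace Ω] (P : Measure Ω) [IsProbabilityMeasure P]
    (wstar : ℝ) (μ : Measure ℝ) [IsProbabilityMeasure μ]
    (hsupp : ∀ᵐ x ∂μ, x ∈ Set.Icc 0 wstar)
    (g : ℝ → ℝ → ℝ) (h : ℝ → ℝ) (J' : ℝ)
    (hgmeas : Measurable (Function.uncurry g)) (hhmeas : Measurable h)
    (hg0 : ∀ x y, 0 ≤ g x y) (hgJ : ∀ x y, g x y ≤ J')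
    (hh0 : ∀ x, 0 ≤ h x) (hhJ : ∀ x, h x ≤ J')
    (W : ℕ → Ω → ℝ) (hWmeas : ∀ i, Measurable (W i))
    (hWid : ∀ i, P.map (W i) = μ)
    (hWindep : ProbabilityTheory.iIndepFun W P)
    (gtilde : ℝ → ℝ) (hgtilde : ∀ x, gtilde x = ∫ y, g x y ∂μ)
    (S : ℕ → Ω → ℝ)
    (hS : ∀ i ω, S i ω = h (W 0 ω) + ∑ j ∈ Finset.range i, g (W 0 ω) (W (j + 1) ω))
    (lamStar : ℝ)
    (hsup_pos : 0 < sSup (gtilde '' Set.Icc 0 wstar))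
    (hlam : sSup (gtilde '' Set.Icc 0 wstar) < lamStar) :
    Tendsto (fun k : ℕ => (k : ℝ) *
        ∫ ω, ∏ i ∈ Finset.range k, S i ω / (S i ω + lamStar) ∂P)
      atTop (nhds 0) := by
  obtain rfl : S = companion h g W := funext fun i => funext (hS i)
  set M := sSup (gtilde '' Set.Icc 0 wstar)
  have hc : 0 < lamStar := hsup_pos.trans hlam
  have hgtilde_le : ∀ x, gtilde x ≤ J' := fun x => by
    rw [hgtilde]
    exact (integral_mono_of_nonneg (ae_of_all _ (hg0 x)) (integrable_const J')
      (ae_of_all _ (hgJ x))).trans_eq (by simp)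
  have hM : ∀ᵐ ω ∂P, ∫ y, g (W 0 ω) y ∂μ ≤ M := by
    filter_upwards [ae_of_ae_map (hWmeas 0).aemeasurable ((hWid 0).symm ▸ hsupp)] with ω hω
    rw [← hgtilde]
    exact le_csSup ⟨J', by rintro _ ⟨x, -, rfl⟩; exact hgtilde_le x⟩ ⟨_, hω, rfl⟩
  have hs : ∀ ω i, 0 ≤ companion h g W i ω := fun ω i => companion_nonneg hh0 hg0 i ω
  have hbound (N : ℕ) : ∑ k ∈ range N, ∫ ω, ratioProd (fun i => companion h g W i ω) lamStar
      (k + 1) ∂P ≤ J' / (lamStar - M) := by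
    rw [le_div_iff₀ (sub_pos.2 hlam), mul_comm, sub_mul]
    linarith [mul_sum_integral_ratioProd_companion_le hWindep hWmeas hWid hgmeas hhmeas hh0 hhJ
      hg0 hgJ hc hM N]
  exact (antitone_integral_ratioProd_companion hgmeas hhmeas hWmeas hh0 hg0 hc
    ).tendsto_nat_mul_of_summable ((summable_nat_add_iff 1).1 (summable_of_sum_range_le
      (fun k => integral_nonneg fun ω => ratioProd_nonneg (hs ω) hc _) hbound))
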